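/- Let α ∈ (0,1] and let g : ℝⁿ → ℝ be continuous with the property that there exists A ≥ 0 such that for every ball B, (1/|B|)∫_B |g(y) − g_B| dy ≤ A |B|^{α/n}. Then g is Hölder continuous of order α, and ‖g‖_{Λ̇_α} ≤ C A with C depending only on n and α (Campanato–Meyers characterization, the converse inclusion BMO_{α,1} ⊂ Λ̇_α). -/

import Mathlib

/-!
Comparing the means of `g` over a ball and over a ball of half the radius inside it costs at most
`2ᵈ` times the mean oscillation on the larger ball, i.e. `O(rᵅ)`. Along the radii `r / 2ᵏ` these
differences form a geometric series, and the means converge to `g x` by continuity, so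
`|g x - g_{B(x,r)}| = O(rᵅ)`. For `r = |x - y|` both `B(x,r)` and `B(y,r)` lie in `B(x,2r)`, whose
mean is within `O(rᵅ)` of both means, hence `|g x - g y| = O(|x - y|ᵅ)`.
-/

open MeasureTheory Metric Real Set

noncomputable section

open Filter Topology Module
open scoped ENNReal

section Average

variable {X : Type*} [MeasurableSpace X] {μ : Measure X} {s t : Set X} {f : X → ℝ}

def meanOscillation (μ : Measure X) (f : X → ℝ) (s : Set X) : ℝ :=
  ⨍ x in s, |f x - ⨍ y in s, f y ∂μ| ∂μ

theorem abs_setAverage_sub_le (hs₀ : μ s ≠ 0) (hs : μ s ≠ ∞) (hf : IntegrableOn f s μ) (c : ℝ) :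
    |(⨍ x in s, f x ∂μ) - c| ≤ ⨍ x in s, |f x - c| ∂μ := by
  have hμs : 0 < μ.real s := ENNReal.toReal_pos hs₀ hs
  have hsub : (⨍ x in s, f x ∂μ) - c = (μ.real s)⁻¹ * ∫ x in s, (f x - c) ∂μ := by
    rw [integral_sub hf (integrableOn_const hs), setIntegral_const, setAverage_eq, smul_eq_mul,
      smul_eq_mul, mul_sub, inv_mul_cancel_left₀ hμs.ne']
  rw [hsub, setAverage_eq, smul_eq_mul, abs_mul, abs_of_pos (inv_pos.2 hμs)]
  gcongr
  exact abs_integral_le_integral_abs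

theorem abs_setAverage_sub_setAverage_le (hst : s ⊆ t) (hs₀ : μ s ≠ 0) (ht : μ t ≠ ∞)
    (hf : IntegrableOn f t μ) :
    |(⨍ x in s, f x ∂μ) - ⨍ x in t, f x ∂μ|
      ≤ μ.real t / μ.real s * meanOscillation μ f t := by
  set c := ⨍ y in t, f y ∂μ
  have hs : μ s ≠ ∞ := ne_top_of_le_ne_top ht (measure_mono hst)
  calc |(⨍ x in s, f x ∂μ) - c|
      ≤ ⨍ x in s, |f x - c| ∂μ := abs_setAverage_sub_le hs₀ hs (hf.mono_set hst) c
    _ = (μ.real s)⁻¹ * ∫ x in s, |f x - c| ∂μ := setAverage_eq _ _ _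
    _ ≤ (μ.real s)⁻¹ * ∫ x in t, |f x - c| ∂μ := by
        refine mul_le_mul_of_nonneg_left ?_ (inv_nonneg.2 measureReal_nonneg)
        exact setIntegral_mono_set (hf.sub (integrableOn_const ht)).abs
          (ae_of_all _ fun _ ↦ abs_nonneg _) hst.eventuallyLE
    _ = μ.real t / μ.real s * ⨍ x in t, |f x - c| ∂μ := by
        rw [← measure_smul_setAverage _ ht, smul_eq_mul]
        ring

end Average

theorem ContinuousAt.tendsto_setAverage_ball {X : Type*} [PseudoMetricSpace X] [ProperSpace X]
    [MeasurableSpace X] [OpensMeasurableSpace X] {μ : Measure X} [μ.IsOpenPosMeasure]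
    [IsFiniteMeasureOnCompacts μ] {f : X → ℝ} {x : X} (hx : ContinuousAt f x)
    (hf : LocallyIntegrable f μ) :
    Tendsto (fun r ↦ ⨍ y in ball x r, f y ∂μ) (𝓝[>] 0) (𝓝 (f x)) := by
  refine Metric.tendsto_nhds.2 fun ε hε ↦ ?_
  obtain ⟨δ, hδ, hfδ⟩ := Metric.continuousAt_iff.1 hx (ε / 2) (half_pos hε)
  filter_upwards [Ioo_mem_nhdsGT hδ] with r ⟨hr, hrδ⟩
  have hmem : (⨍ y in ball x r, f y ∂μ) ∈ closedBall (f x) (ε / 2) :=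
    (convex_closedBall _ _).set_average_mem isClosed_closedBall (measure_ball_pos μ x hr).ne'
      measure_ball_lt_top.ne
      ((ae_restrict_iff' measurableSet_ball).2 (ae_of_all _ fun y hy ↦
        (hfδ ((mem_ball.1 hy).trans hrδ)).le))
      ((hf.integrableOn_isCompact (isCompact_closedBall x r)).mono_set ball_subset_closedBall)
  exact (mem_closedBall.1 hmem).trans_lt (half_lt_self hε)

theorem two_rpow_neg_lt_one {α : ℝ} (hα : 0 < α) : (2 : ℝ) ^ (-α) < 1 :=
  rpow_lt_one_of_one_lt_of_neg one_lt_two (neg_lt_zero.2 hα)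

def campanatoConst (d : ℕ) (α : ℝ) : ℝ :=
  2 ^ (d + 1) * ((1 - 2 ^ (-α))⁻¹ + 2 ^ α)

theorem campanatoConst_pos (d : ℕ) {α : ℝ} (hα : 0 < α) : 0 < campanatoConst d α := by
  have : 0 < (1 - (2 : ℝ) ^ (-α))⁻¹ := inv_pos.2 (sub_pos.2 (two_rpow_neg_lt_one hα))
  unfold campanatoConst
  positivity

section Haar

variable {E : Type*} [NormedAddCommGroup E] [NormedSpace ℝ E] [FiniteDimensional ℝ E]
  [MeasurableSpace E] [BorelSpace E] (μ : Measure E) [μ.IsAddHaarMeasure]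

theorem addHaar_real_ball_of_pos (x : E) {r : ℝ} (hr : 0 < r) :
    μ.real (ball x r) = r ^ finrank ℝ E * μ.real (ball 0 1) := by
  rw [measureReal_def, Measure.addHaar_ball_of_pos μ x hr, ENNReal.toReal_mul,
    ENNReal.toReal_ofReal (by positivity), measureReal_def]

theorem addHaar_real_ball_div_addHaar_real_ball (x y : E) {c r : ℝ} (hc : 0 < c) (hr : 0 < r) :
    μ.real (ball x (c * r)) / μ.real (ball y r) = c ^ finrank ℝ E := by
  have hball : 0 < μ.real (ball (0 : E) 1) :=
    ENNReal.toReal_pos (measure_ball_pos μ 0 one_pos).ne' measure_ball_lt_top.ne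
  rw [addHaar_real_ball_of_pos μ x (mul_pos hc hr), addHaar_real_ball_of_pos μ y hr, mul_pow]
  field_simp

variable {μ} {g : E → ℝ} {M α : ℝ}

theorem abs_setAverage_ball_sub_setAverage_ball_two_mul_le
    (hg : LocallyIntegrable g μ)
    (hosc : ∀ x r, 0 < r → meanOscillation μ g (ball x r) ≤ M * r ^ α)
    {z w : E} {r : ℝ} (hr : 0 < r) (hzw : ball z r ⊆ ball w (2 * r)) :
    |(⨍ y in ball z r, g y ∂μ) - ⨍ y in ball w (2 * r), g y ∂μ|
      ≤ 2 ^ finrank ℝ E * M * (2 * r) ^ α := by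
  have h2r : 0 < 2 * r := by positivity
  calc _ ≤ μ.real (ball w (2 * r)) / μ.real (ball z r)
          * meanOscillation μ g (ball w (2 * r)) :=
        abs_setAverage_sub_setAverage_le hzw (measure_ball_pos μ z hr).ne' measure_ball_lt_top.ne
          ((hg.integrableOn_isCompact (isCompact_closedBall w _)).mono_set ball_subset_closedBall)
    _ ≤ 2 ^ finrank ℝ E * (M * (2 * r) ^ α) := by
        rw [addHaar_real_ball_div_addHaar_real_ball μ w z two_pos hr]
        gcongr
        exact hosc w _ h2r
    _ = 2 ^ finrank ℝ E * M * (2 * r) ^ α := by ring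

theorem abs_sub_setAverage_ball_le (hg : Continuous g) (hα : 0 < α)
    (hosc : ∀ x r, 0 < r → meanOscillation μ g (ball x r) ≤ M * r ^ α)
    (x : E) {r : ℝ} (hr : 0 < r) :
    |g x - ⨍ y in ball x r, g y ∂μ| ≤ 2 ^ finrank ℝ E * M * r ^ α / (1 - 2 ^ (-α)) := by
  set a : ℕ → ℝ := fun k ↦ ⨍ y in ball x (r / 2 ^ k), g y ∂μ
  have hstep : ∀ k, dist (a k) (a (k + 1)) ≤ 2 ^ finrank ℝ E * M * r ^ α * (2 ^ (-α)) ^ k := by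
    intro k
    have hrk : 2 * (r / 2 ^ (k + 1)) = r / 2 ^ k := by rw [pow_succ]; field_simp
    have hpow : (r / 2 ^ k) ^ α = r ^ α * (2 ^ (-α)) ^ k := by
      rw [div_rpow hr.le (by positivity), ← rpow_natCast, ← rpow_natCast, ← rpow_mul two_pos.le,
        ← rpow_mul two_pos.le, div_eq_mul_inv, ← rpow_neg two_pos.le, mul_comm (k : ℝ), neg_mul]
    have := abs_setAverage_ball_sub_setAverage_ball_two_mul_le hg.locallyIntegrable hosc
      (z := x) (w := x) (r := r / 2 ^ (k + 1)) (by positivity)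
      (ball_subset_ball (by linarith [show 0 < r / 2 ^ (k + 1) by positivity]))
    rw [hrk, hpow] at this
    rw [dist_comm, Real.dist_eq]
    linarith
  have hlim : Tendsto a atTop (𝓝 (g x)) := by
    refine (hg.continuousAt.tendsto_setAverage_ball hg.locallyIntegrable).comp ?_
    refine tendsto_nhdsWithin_iff.2 ⟨?_, Eventually.of_forall fun k ↦ mem_Ioi.2 (by positivity)⟩
    simpa [div_eq_mul_inv] using (tendsto_pow_atTop_nhds_zero_of_lt_one (by norm_num)
      (by norm_num : (2⁻¹ : ℝ) < 1)).const_mul r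
  simpa [a, Real.dist_eq, abs_sub_comm] using
    dist_le_of_le_geometric_of_tendsto₀ _ _ (two_rpow_neg_lt_one hα) hstep hlim

theorem abs_sub_le_campanatoConst_mul_dist_rpow (hg : Continuous g) (hα : 0 < α)
    (hosc : ∀ x r, 0 < r → meanOscillation μ g (ball x r) ≤ M * r ^ α) (x y : E) :
    |g x - g y| ≤ campanatoConst (finrank ℝ E) α * M * dist x y ^ α := by
  obtain hxy | hxy := (dist_nonneg (x := x) (y := y)).eq_or_lt
  · simp [dist_eq_zero.1 hxy.symm, zero_rpow hα.ne']
  set r := dist x y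
  have hx := abs_sub_setAverage_ball_le hg hα hosc x hxy
  have hy := abs_sub_setAverage_ball_le hg hα hosc y hxy
  have hxx := abs_setAverage_ball_sub_setAverage_ball_two_mul_le hg.locallyIntegrable hosc hxy
    (ball_subset_ball (by linarith) : ball x r ⊆ ball x (2 * r))
  have hyx := abs_setAverage_ball_sub_setAverage_ball_two_mul_le hg.locallyIntegrable hosc hxy
    (ball_subset_ball' (by rw [dist_comm]; linarith) : ball y r ⊆ ball x (2 * r))
  have hC : campanatoConst (finrank ℝ E) α * M * r ^ α
      = 2 * (2 ^ finrank ℝ E * M * r ^ α / (1 - 2 ^ (-α)))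
        + 2 * (2 ^ finrank ℝ E * M * (2 * r) ^ α) := by
    rw [mul_rpow two_pos.le hxy.le, campanatoConst]
    ring
  rw [hC, abs_le]
  rw [abs_le] at hx hy hxx hyx
  constructor <;> linarith

end Haar

theorem stmt14_general (n : ℕ) (hn : 1 ≤ n) (α : ℝ) (hα0 : 0 < α) :
    ∃ C > 0, ∀ (g : EuclideanSpace ℝ (Fin n) → ℝ) (A : ℝ), 0 ≤ A →
      Continuous g →
      (∀ (x : EuclideanSpace ℝ (Fin n)) (r : ℝ), 0 < r →
        (⨍ y in ball x r, |g y - ⨍ z in ball x r, g z|)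
          ≤ A * (volume (ball x r)).toReal ^ (α / n)) →
      ∀ x y, |g x - g y| ≤ C * A * dist x y ^ α := by
  set κ := volume.real (ball (0 : EuclideanSpace ℝ (Fin n)) 1)
  have hκ : 0 < κ :=
    ENNReal.toReal_pos (measure_ball_pos volume _ one_pos).ne' measure_ball_lt_top.ne
  refine ⟨campanatoConst n α * κ ^ (α / n),
    mul_pos (campanatoConst_pos n hα0) (rpow_pos_of_pos hκ _), fun g A _ hg hosc x y ↦ ?_⟩
  have hvol : ∀ (x : EuclideanSpace ℝ (Fin n)) (r : ℝ), 0 < r →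
      (volume (ball x r)).toReal ^ (α / n) = κ ^ (α / n) * r ^ α := by
    intro x r hr
    rw [← measureReal_def, addHaar_real_ball_of_pos volume x hr, finrank_euclideanSpace_fin,
      mul_rpow (by positivity) hκ.le, ← rpow_natCast, ← rpow_mul hr.le,
      mul_div_cancel₀ _ (Nat.cast_ne_zero.2 (Nat.one_le_iff_ne_zero.1 hn)), mul_comm]
  have hosc' : ∀ x r, 0 < r → meanOscillation volume g (ball x r) ≤ A * κ ^ (α / n) * r ^ α :=
    fun x r hr ↦ by simpa only [meanOscillation, hvol x r hr, mul_assoc] using hosc x r hr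
  calc |g x - g y| ≤ campanatoConst n α * (A * κ ^ (α / n)) * dist x y ^ α := by
        simpa only [finrank_euclideanSpace_fin] using
          abs_sub_le_campanatoConst_mul_dist_rpow hg hα0 hosc' x y
    _ = campanatoConst n α * κ ^ (α / n) * A * dist x y ^ α := by ring

/-- Campanato–Meyers characterization (converse direction): if a continuous g has
mean oscillation (1/|B|)∫_B |g - g_B| ≤ A |B|^{α/n} over every ball B, then g is
Hölder continuous of order α with ‖g‖_{Λ̇_α} ≤ C A, C = C(n,α). -/
theorem stmt14 (n : ℕ) (hn : 1 ≤ n) (α : ℝ) (hα0 : 0 < α) (hα1 : α ≤ 1) :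
    ∃ C > 0, ∀ (g : EuclideanSpace ℝ (Fin n) → ℝ) (A : ℝ), 0 ≤ A →
      Continuous g →
      (∀ (x : EuclideanSpace ℝ (Fin n)) (r : ℝ), 0 < r →
        (⨍ y in ball x r, |g y - ⨍ z in ball x r, g z|)
          ≤ A * (volume (ball x r)).toReal ^ (α / n)) →
      ∀ x y, |g x - g y| ≤ C * A * dist x y ^ α :=
  stmt14_general n hn α hα0
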